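/- arXiv:1503.07616 — 3 statements merged into one kernel-verified Lean document; each statement's English description precedes it below -/
import Mathlib

section
/- Let n ≥ 2 be an integer and let f ∈ S_r(ℝ^{n-1} × ℝ^{n-1}). Then for every ξ ∈ ℝ^{n-1} and v ∈ ℝ^{n-1}, 𝔉₁(Cf)(ξ, v) = 𝔉f(ξ, |v|·ξ) = 𝔉f(ξ, |ξ|·v). -/
/-!
The shear `(x, y) ↦ (x + ‖v‖ y, y)` preserves Lebesgue measure on the product, and substituting
it into `𝔉₁(Cf)(ξ, v) = ∫∫ f(x + ‖v‖ y, y) e^{-i x·ξ} dy dx` gives `𝔉f(ξ, -‖v‖ ξ)`, since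
`(x - ‖v‖ y)·ξ = x·ξ + y·(-‖v‖ ξ)`. Radiality of `f` in `y` makes `𝔉f(ξ, η)` invariant under
orthogonal maps in `η`; any two vectors of equal norm are exchanged by a reflection, so `𝔉f(ξ, η)`
depends only on `‖η‖`, and `‖-‖v‖ ξ‖ = ‖v‖ ‖ξ‖ = ‖‖ξ‖ v‖`.
-/

open MeasureTheory Complex
open scoped Real

noncomputable section

/-- `ℝ^{n-1}` as a Euclidean space. -/
abbrev Euc (n : ℕ) := EuclideanSpace ℝ (Fin (n - 1))

/-- `f` belongs to `S_r(ℝ^{n-1} × ℝ^{n-1})`: it is a Schwartz function which is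
radial in the second variable. -/
def IsSr (n : ℕ) (f : Euc n × Euc n → ℝ) : Prop :=
  (∃ g : SchwartzMap (Euc n × Euc n) ℝ, ⇑g = f) ∧
  ∀ (U : Euc n ≃ₗᵢ[ℝ] Euc n) (x y : Euc n), f (x, U y) = f (x, y)

/-- The cone transform `Cf(u,v) = ∫ f(u + |v|y, y) dy`. -/
def coneT (n : ℕ) (f : Euc n × Euc n → ℝ) : Euc n × Euc n → ℝ :=
  fun p => ∫ y : Euc n, f (p.1 + ‖p.2‖ • y, y)

/-- The Fourier transform of `f` in the first variable,
`𝔉₁f(ξ, y) = ∫ f(x, y) e^{-i x·ξ} dx`. -/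
def fourierFst (n : ℕ) (f : Euc n × Euc n → ℝ) (ξ y : Euc n) : ℂ :=
  ∫ x : Euc n, (f (x, y) : ℂ) * Complex.exp (-Complex.I * ((inner ℝ x ξ : ℝ) : ℂ))

/-- The full `2(n-1)`-dimensional Fourier transform
`𝔉f(ξ, η) = ∫∫ f(x, y) e^{-i (x·ξ + y·η)} dx dy`. -/
def fourierFull (n : ℕ) (f : Euc n × Euc n → ℝ) (ξ η : Euc n) : ℂ :=
  ∫ p : Euc n × Euc n,
    (f p : ℂ) * Complex.exp (-Complex.I * (((inner ℝ p.1 ξ + inner ℝ p.2 η : ℝ)) : ℂ))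

-- Instance search does not unfold `volume` on a product to `volume.prod volume`.
instance {E F : Type*} [NormedAddCommGroup E] [InnerProductSpace ℝ E] [FiniteDimensional ℝ E]
    [MeasurableSpace E] [BorelSpace E] [NormedAddCommGroup F] [InnerProductSpace ℝ F]
    [FiniteDimensional ℝ F] [MeasurableSpace F] [BorelSpace F] :
    (volume : Measure (E × F)).IsAddHaarMeasure :=
  Measure.prod.instIsAddHaarMeasure volume volume

theorem measurePreserving_shear {E F : Type*} [Add E] [MeasurableSpace E] [MeasurableAdd₂ E]
    [MeasurableSpace F] (μ : Measure E) (ν : Measure F) [SFinite μ] [SFinite ν]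
    [μ.IsAddRightInvariant] {L : F → E} (hL : Measurable L) :
    MeasurePreserving (fun p : E × F => (p.1 + L p.2, p.2)) (μ.prod ν) (μ.prod ν) := by
  have hskew : MeasurePreserving (fun q : F × E => (q.1, q.2 + L q.1)) (ν.prod μ) (ν.prod μ) :=
    (MeasurePreserving.id ν).skew_product (g := fun y x => x + L y)
      (measurable_snd.add (hL.comp measurable_fst))
      (ae_of_all _ fun y => map_add_right_eq_self μ (L y))
  exact (Measure.measurePreserving_swap.comp hskew).comp Measure.measurePreserving_swap

theorem integrable_ofReal_mul_exp_neg_I_mul {α : Type*} [MeasurableSpace α] {μ : Measure α}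
    {f : α → ℝ} (hf : Integrable f μ) {φ : α → ℝ} (hφ : Measurable φ) :
    Integrable (fun a => (f a : ℂ) * Complex.exp (-Complex.I * (φ a : ℂ))) μ := by
  refine hf.ofReal.mul_bdd (c := 1) (by fun_prop) (ae_of_all _ fun a => ?_)
  rw [Complex.norm_exp]
  simp

theorem integral_integral_shear_mul_exp_inner {E : Type*} [NormedAddCommGroup E]
    [InnerProductSpace ℝ E] [SecondCountableTopology E] [MeasurableSpace E] [BorelSpace E] (μ : Measure E) [SigmaFinite μ]
    [μ.IsAddRightInvariant] {f : E × E → ℝ} (hf : Integrable f (μ.prod μ)) (c : ℝ) (ξ : E) :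
    ∫ x, ((∫ y, f (x + c • y, y) ∂μ : ℝ) : ℂ) *
        Complex.exp (-Complex.I * ((inner ℝ x ξ : ℝ) : ℂ)) ∂μ =
      ∫ p, (f p : ℂ) * Complex.exp
        (-Complex.I * (((inner ℝ p.1 ξ + inner ℝ p.2 (-(c • ξ)) : ℝ)) : ℂ)) ∂(μ.prod μ) := by
  set G : E × E → ℂ := fun p => (f p : ℂ) * Complex.exp
    (-Complex.I * (((inner ℝ p.1 ξ + inner ℝ p.2 (-(c • ξ)) : ℝ)) : ℂ))
  have hG : Integrable G (μ.prod μ) := integrable_ofReal_mul_exp_neg_I_mul hf (by fun_prop)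
  have hS := measurePreserving_shear μ μ (measurable_const_smul c)
  have hGS (x y : E) : G (x + c • y, y) =
      (f (x + c • y, y) : ℂ) * Complex.exp (-Complex.I * ((inner ℝ x ξ : ℝ) : ℂ)) := by
    simp only [G, inner_add_left, inner_neg_right, real_inner_smul_left, real_inner_smul_right]
    ring_nf
  calc ∫ x, ((∫ y, f (x + c • y, y) ∂μ : ℝ) : ℂ) *
        Complex.exp (-Complex.I * ((inner ℝ x ξ : ℝ) : ℂ)) ∂μ
      = ∫ x, ∫ y, G (x + c • y, y) ∂μ ∂μ := by
        simp only [hGS, integral_mul_const, integral_complex_ofReal]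
    _ = ∫ p, G (p.1 + c • p.2, p.2) ∂(μ.prod μ) :=
        integral_integral (hS.integrable_comp_of_integrable hG)
    _ = ∫ p, G p ∂(μ.prod μ) := by
        rw [← integral_map hS.measurable.aemeasurable (by rw [hS.map_eq]; exact hG.1), hS.map_eq]

theorem fourierFst_coneT {n : ℕ} {f : Euc n × Euc n → ℝ} (hf : Integrable f) (ξ v : Euc n) :
    fourierFst n (coneT n f) ξ v = fourierFull n f ξ (-(‖v‖ • ξ)) := by
  unfold fourierFst coneT fourierFull
  exact integral_integral_shear_mul_exp_inner volume hf ‖v‖ ξ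

section Radial

variable {n : ℕ} {f : Euc n × Euc n → ℝ}

theorem fourierFull_linearIsometryEquiv_apply
    (hrad : ∀ (U : Euc n ≃ₗᵢ[ℝ] Euc n) (x y : Euc n), f (x, U y) = f (x, y))
    (ξ η : Euc n) (U : Euc n ≃ₗᵢ[ℝ] Euc n) :
    fourierFull n f ξ (U η) = fourierFull n f ξ η := by
  have hT : MeasurePreserving ((MeasurableEquiv.refl (Euc n)).prodCongr U.toMeasurableEquiv)
      (volume : Measure (Euc n × Euc n)) volume :=
    (MeasurePreserving.id volume).prod U.measurePreserving
  rw [fourierFull, ← hT.integral_comp', fourierFull]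
  congr 1 with ⟨x, y⟩
  simp [MeasurableEquiv.prodCongr, hrad]

theorem fourierFull_eq_of_norm_eq
    (hrad : ∀ (U : Euc n ≃ₗᵢ[ℝ] Euc n) (x y : Euc n), f (x, U y) = f (x, y))
    (ξ : Euc n) {a b : Euc n} (h : ‖a‖ = ‖b‖) :
    fourierFull n f ξ a = fourierFull n f ξ b := by
  rw [← Submodule.reflection_sub h]
  exact (fourierFull_linearIsometryEquiv_apply hrad ξ a _).symm

end Radial

theorem fourier_slice_cone_general (n : ℕ) (f : Euc n × Euc n → ℝ)
    (hf : IsSr n f) (ξ v : Euc n) :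
    fourierFst n (coneT n f) ξ v = fourierFull n f ξ (‖v‖ • ξ) ∧
    fourierFull n f ξ (‖v‖ • ξ) = fourierFull n f ξ (‖ξ‖ • v) := by
  obtain ⟨⟨g, rfl⟩, hrad⟩ := hf
  refine ⟨?_, fourierFull_eq_of_norm_eq hrad ξ ?_⟩
  · rw [fourierFst_coneT g.integrable]
    exact fourierFull_eq_of_norm_eq hrad ξ (norm_neg _)
  · rw [norm_smul, norm_smul, norm_norm, norm_norm, mul_comm]

/-- **Fourier slice theorem for the cone transform.**
For `f ∈ S_r(ℝ^{n-1} × ℝ^{n-1})`, `𝔉₁(Cf)(ξ, v) = 𝔉f(ξ, |v|ξ) = 𝔉f(ξ, |ξ|v)`. -/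
theorem fourier_slice_cone (n : ℕ) (hn : 2 ≤ n) (f : Euc n × Euc n → ℝ)
    (hf : IsSr n f) (ξ v : Euc n) :
    fourierFst n (coneT n f) ξ v = fourierFull n f ξ (‖v‖ • ξ) ∧
    fourierFull n f ξ (‖v‖ • ξ) = fourierFull n f ξ (‖ξ‖ • v) :=
  fourier_slice_cone_general n f hf ξ v

end
end

section
/- Let n ≥ 3 be an integer. Let f, g ∈ S_r(ℝ^{n-1} × ℝ^{n-1}) and let 𝐟, 𝐠 : ℝ^{n-1} × [0,∞) → ℝ be the functions with f(x, y) = 𝐟(x, |y|) and g(x, y) = 𝐠(x, |y|). Then ∫_{ℝ^{n-1}} ∫_0^∞ 𝒞𝐟(u, s) 𝐠(u, s) s^{n-2} ds du = ∫_{ℝ^{n-1}} ∫_0^∞ 𝐟(x, z) 𝒞𝐠(x, z) z^{n-2} dz dx. -/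
/-!
Both sides are integrals over `(u, s, θ, z) ∈ ℝ^{n-1} × (0,∞) × S^{n-2} × (0,∞)`: the left one of
`𝐟(u + zsθ, z) 𝐠(u, s) (sz)^{n-2}`, the right one of `𝐟(x, z) 𝐠(x + szθ, s) (sz)^{n-2}`. The
involution `(u, s, θ, z) ↦ (u + zsθ, z, -θ, s)` carries the first integrand to the second, and it
preserves the product measure: it is a translation in `u`, followed by exchanging `s` with `z` and
reflecting the sphere. Fubini's theorem applies because the Schwartz decay of `f` and `g` dominates
the integrand by a multiple of `(1 + |u|)^{-n} (1 + s)^{-2} (1 + z)^{-2}`.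
-/

open MeasureTheory Complex
open scoped Real

noncomputable section

/-- The cone transform `𝒞𝐟(u,s) = ∫_{S^{n-2}} ∫_0^∞ 𝐟(u + zsθ, z) z^{n-2} dz dS(θ)`,
where the sphere `S^{n-2} ⊂ ℝ^{n-1}` carries its standard surface measure. -/
def coneTS (n : ℕ) (F : Euc n × ℝ → ℝ) (u : Euc n) (s : ℝ) : ℝ :=
  ∫ θ : Metric.sphere (0 : Euc n) 1,
    (∫ z in Set.Ioi (0 : ℝ), F (u + (z * s) • (θ : Euc n), z) * z ^ (n - 2))
    ∂(volume : Measure (Euc n)).toSphere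

open Function Set Metric

theorem MeasureTheory.integral_prod_prod_prod {α β γ δ V : Type*} [MeasurableSpace α]
    [MeasurableSpace β] [MeasurableSpace γ] [MeasurableSpace δ] [NormedAddCommGroup V]
    [NormedSpace ℝ V] {μa : Measure α} {μb : Measure β} {μc : Measure γ} {μd : Measure δ}
    [SFinite μa] [SFinite μb] [SFinite μc] [SFinite μd] {K : α × β × γ × δ → V}
    (hK : Integrable K (μa.prod (μb.prod (μc.prod μd)))) :
    ∫ q, K q ∂(μa.prod (μb.prod (μc.prod μd))) =
      ∫ a, ∫ b, ∫ c, ∫ d, K (a, b, c, d) ∂μd ∂μc ∂μb ∂μa := by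
  rw [integral_prod _ hK]
  refine integral_congr_ae ?_
  filter_upwards [hK.prod_right_ae] with a ha
  rw [integral_prod _ ha]
  refine integral_congr_ae ?_
  filter_upwards [ha.prod_right_ae] with b hb
  exact integral_prod _ hb

theorem MeasureTheory.measurePreserving_add_right_prod {G W : Type*} [Add G]
    [MeasurableSpace G] [MeasurableAdd₂ G] [MeasurableSpace W] (μ : Measure G) (ν : Measure W)
    [SFinite μ] [SFinite ν] [μ.IsAddRightInvariant] {c : W → G} (hc : Measurable c) :
    MeasurePreserving (fun p : G × W => (p.1 + c p.2, p.2)) (μ.prod ν) (μ.prod ν) := by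
  have h : MeasurePreserving (fun p : W × G => (p.1, p.2 + c p.1)) (ν.prod μ) (ν.prod μ) :=
    (MeasurePreserving.id ν).skew_product (by fun_prop)
      (ae_of_all _ fun w => map_add_right_eq_self μ (c w))
  exact (Measure.measurePreserving_swap.comp h).comp Measure.measurePreserving_swap

instance MeasureTheory.Measure.isNegInvariant_map_toSphere {E : Type*} [NormedAddCommGroup E]
    [NormedSpace ℝ E] [MeasurableSpace E] [BorelSpace E] (μ : Measure E) [μ.IsNegInvariant] :
    (μ.toSphere.map ((↑) : sphere (0 : E) 1 → E)).IsNegInvariant := by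
  have hval : Measurable ((↑) : sphere (0 : E) 1 → E) := measurable_subtype_coe
  have hneg (s : Set E) : sphere (0 : E) 1 ∩ -s = -(sphere 0 1 ∩ s) := by
    rw [inter_neg, neg_sphere, neg_zero]
  refine ⟨Measure.ext fun s hs => ?_⟩
  rw [Measure.neg, map_apply measurable_neg hs, Set.neg_preimage, map_apply hval hs.neg,
    map_apply hval hs, μ.toSphere_apply' (hval hs.neg), μ.toSphere_apply' (hval hs),
    Subtype.image_preimage_coe, Subtype.image_preimage_coe, hneg, Set.smul_neg,
    Measure.measure_neg]

theorem integrable_inv_one_add_norm_pow {E : Type*} [NormedAddCommGroup E] [NormedSpace ℝ E]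
    [FiniteDimensional ℝ E] [MeasurableSpace E] [BorelSpace E] (μ : Measure E) [μ.IsAddHaarMeasure]
    {k : ℕ} (hk : Module.finrank ℝ E < k) : Integrable (fun x : E => ((1 + ‖x‖) ^ k)⁻¹) μ := by
  simpa [Real.rpow_neg, Real.rpow_natCast] using
    integrable_one_add_norm (μ := μ) (r := k) (by exact_mod_cast hk)

theorem SchwartzMap.exists_norm_comp_smul_mul_pow_le {E F : Type*} [NormedAddCommGroup E]
    [NormedSpace ℝ E] [NormedAddCommGroup F] [NormedSpace ℝ F] (φ : SchwartzMap (E × F) ℝ)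
    {e : F} (he : ‖e‖ = 1) (k m : ℕ) :
    ∃ C, ∀ (x : E) (z : ℝ),
      ‖φ (x, z • e) * z ^ m‖ ≤ C * ((1 + ‖x‖) ^ k)⁻¹ * ((1 + ‖z‖) ^ 2)⁻¹ := by
  refine ⟨2 ^ (k + 2 + m) * ((Finset.Iic (k + 2 + m, 0)).sup fun m =>
    SchwartzMap.seminorm ℝ m.1 m.2) φ, fun x z => ?_⟩
  have hdecay := φ.one_add_le_sup_seminorm_apply (𝕜 := ℝ) (m := (k + 2 + m, 0)) le_rfl le_rfl
    (x, z • e)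
  rw [norm_iteratedFDeriv_zero] at hdecay
  have hze : ‖z • e‖ = ‖z‖ := by rw [norm_smul, he, mul_one]
  have hweight : (1 + ‖x‖) ^ k * (1 + ‖z‖) ^ 2 * ‖z‖ ^ m ≤ (1 + ‖(x, z • e)‖) ^ (k + 2 + m) := by
    have hx : ‖x‖ ≤ ‖(x, z • e)‖ := norm_fst_le (x, z • e)
    have hz : ‖z‖ ≤ ‖(x, z • e)‖ := hze ▸ norm_snd_le (x, z • e)
    rw [pow_add, pow_add]
    gcongr
    linarith
  rw [mul_assoc, ← mul_inv, ← div_eq_mul_inv, le_div_iff₀ (by positivity), norm_mul, norm_pow]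
  calc ‖φ (x, z • e)‖ * ‖z‖ ^ m * ((1 + ‖x‖) ^ k * (1 + ‖z‖) ^ 2)
      = (1 + ‖x‖) ^ k * (1 + ‖z‖) ^ 2 * ‖z‖ ^ m * ‖φ (x, z • e)‖ := by ring
    _ ≤ (1 + ‖(x, z • e)‖) ^ (k + 2 + m) * ‖φ (x, z • e)‖ := by gcongr
    _ ≤ _ := hdecay

section ConeTransform

variable {E : Type*} [NormedAddCommGroup E] [NormedSpace ℝ E]

def coneKernel (Φ Ψ : E × ℝ → ℝ) (q : E × ℝ × E × ℝ) : ℝ :=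
  Φ (q.1 + (q.2.2.2 * q.2.1) • q.2.2.1, q.2.2.2) * Ψ (q.1, q.2.1)

def coneFlip (q : E × ℝ × E × ℝ) : E × ℝ × E × ℝ :=
  (q.1 + (q.2.2.2 * q.2.1) • q.2.2.1, q.2.2.2, -q.2.2.1, q.2.1)

theorem coneFlip_involutive : Involutive (coneFlip (E := E)) := by
  rintro ⟨u, s, θ, z⟩
  simp [coneFlip, mul_comm z s]

theorem coneKernel_coneFlip (Φ Ψ : E × ℝ → ℝ) (q : E × ℝ × E × ℝ) :
    coneKernel Φ Ψ (coneFlip q) =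
      Φ (q.1, q.2.1) * Ψ (q.1 + (q.2.2.2 * q.2.1) • q.2.2.1, q.2.2.2) := by
  simp [coneKernel, coneFlip, mul_comm q.2.1]

variable [MeasurableSpace E]

def coneTransform (σ : Measure E) (ρ : Measure ℝ) (Φ : E × ℝ → ℝ) (u : E) (s : ℝ) : ℝ :=
  ∫ θ, ∫ z, Φ (u + (z * s) • θ, z) ∂ρ ∂σ

variable (μ σ : Measure E) (ρ : Measure ℝ)

theorem coneKernel_ae_eq {Φ Φ' Ψ Ψ' : E × ℝ → ℝ} (hρ : ∀ᵐ z ∂ρ, 0 < z)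
    (hΦ : ∀ x, ∀ z > 0, Φ (x, z) = Φ' (x, z)) (hΨ : ∀ u, ∀ s > 0, Ψ (u, s) = Ψ' (u, s)) :
    coneKernel Φ Ψ =ᵐ[μ.prod (ρ.prod (σ.prod ρ))] coneKernel Φ' Ψ' := by
  have hs : ∀ᵐ q ∂(μ.prod (ρ.prod (σ.prod ρ))), 0 < q.2.1 :=
    Measure.quasiMeasurePreserving_snd.ae (Measure.quasiMeasurePreserving_fst.ae hρ)
  have hz : ∀ᵐ q ∂(μ.prod (ρ.prod (σ.prod ρ))), 0 < q.2.2.2 :=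
    Measure.quasiMeasurePreserving_snd.ae (Measure.quasiMeasurePreserving_snd.ae
      (Measure.quasiMeasurePreserving_snd.ae hρ))
  filter_upwards [hs, hz] with q hs hz
  rw [coneKernel, coneKernel, hΦ _ _ hz, hΨ _ _ hs]

variable [BorelSpace E] [SecondCountableTopology E]

theorem integrable_coneKernel [IsFiniteMeasure σ] {Φ Ψ : E × ℝ → ℝ} (hΦ : Continuous Φ)
    (hΨ : Continuous Ψ) {a w : ℝ → ℝ} {v : E → ℝ} (ha : Integrable a ρ) (hv : Integrable v μ)
    (hw : Integrable w ρ) (hΦa : ∀ p, ‖Φ p‖ ≤ a p.2) (hΨvw : ∀ p, ‖Ψ p‖ ≤ v p.1 * w p.2) :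
    Integrable (coneKernel Φ Ψ) (μ.prod (ρ.prod (σ.prod ρ))) := by
  refine (hv.mul_prod (hw.mul_prod ((integrable_const (1 : ℝ)).mul_prod ha))).mono'
    ((hΦ.comp (by fun_prop)).mul (hΨ.comp (by fun_prop))).aestronglyMeasurable
    (ae_of_all _ fun q => ?_)
  rw [coneKernel, norm_mul]
  exact (mul_le_mul (hΦa _) (hΨvw _) (norm_nonneg _) ((norm_nonneg _).trans (hΦa _))).trans_eq
    (by ring)

theorem measurable_coneFlip : Measurable (coneFlip (E := E)) := by
  unfold coneFlip; fun_prop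

variable [SFinite μ] [SFinite σ] [SFinite ρ]

theorem measurePreserving_coneFlip [μ.IsAddRightInvariant] [σ.IsNegInvariant] :
    MeasurePreserving coneFlip (μ.prod (ρ.prod (σ.prod ρ))) (μ.prod (ρ.prod (σ.prod ρ))) := by
  have hperm : MeasurePreserving (fun w : ℝ × E × ℝ => (w.2.2, -w.2.1, w.1))
      (ρ.prod (σ.prod ρ)) (ρ.prod (σ.prod ρ)) :=
    (measurePreserving_prodAssoc ρ σ ρ).comp
      (((Measure.measurePreserving_swap.comp ((Measure.measurePreserving_neg σ).prod
        (MeasurePreserving.id ρ))).prod (MeasurePreserving.id ρ)).comp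
          Measure.measurePreserving_swap)
  exact ((MeasurePreserving.id μ).prod hperm).comp
    (measurePreserving_add_right_prod μ _
      (c := fun w : ℝ × E × ℝ => (w.2.2 * w.1) • w.2.1) (by fun_prop : Continuous _).measurable)

theorem integral_coneTransform_mul [μ.IsAddRightInvariant] [σ.IsNegInvariant]
    {Φ Ψ : E × ℝ → ℝ} (hK : Integrable (coneKernel Φ Ψ) (μ.prod (ρ.prod (σ.prod ρ)))) :
    ∫ u, ∫ s, coneTransform σ ρ Φ u s * Ψ (u, s) ∂ρ ∂μ =
      ∫ x, ∫ z, Φ (x, z) * coneTransform σ ρ Ψ x z ∂ρ ∂μ := by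
  have hflip := measurePreserving_coneFlip μ σ ρ
  calc ∫ u, ∫ s, coneTransform σ ρ Φ u s * Ψ (u, s) ∂ρ ∂μ
      = ∫ q, coneKernel Φ Ψ q ∂(μ.prod (ρ.prod (σ.prod ρ))) := by
        rw [integral_prod_prod_prod hK]
        simp only [coneTransform, coneKernel, ← integral_mul_const]
    _ = ∫ q, coneKernel Φ Ψ (coneFlip q) ∂(μ.prod (ρ.prod (σ.prod ρ))) :=
        (hflip.integral_comp (MeasurableEquiv.ofInvolutive _ coneFlip_involutive
          measurable_coneFlip).measurableEmbedding _).symm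
    _ = ∫ x, ∫ z, Φ (x, z) * coneTransform σ ρ Ψ x z ∂ρ ∂μ := by
        refine (integral_prod_prod_prod (hflip.integrable_comp_of_integrable hK)).trans ?_
        simp only [comp_apply, coneKernel_coneFlip, coneTransform, ← integral_const_mul]

end ConeTransform

theorem SchwartzMap.integrable_coneKernel {E : Type*} [NormedAddCommGroup E] [NormedSpace ℝ E]
    [FiniteDimensional ℝ E] [MeasurableSpace E] [BorelSpace E] (μ : Measure E) [μ.IsAddHaarMeasure]
    (σ : Measure E) [IsFiniteMeasure σ] (s : Set ℝ) (φ ψ : SchwartzMap (E × E) ℝ) {e : E}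
    (he : ‖e‖ = 1) (m : ℕ) :
    Integrable
      (coneKernel (fun p => φ (p.1, p.2 • e) * p.2 ^ m) (fun p => ψ (p.1, p.2 • e) * p.2 ^ m))
      (μ.prod ((volume.restrict s).prod (σ.prod (volume.restrict s)))) := by
  obtain ⟨A, hA⟩ := φ.exists_norm_comp_smul_mul_pow_le he 0 m
  obtain ⟨B, hB⟩ := ψ.exists_norm_comp_smul_mul_pow_le he (Module.finrank ℝ E + 1) m
  have hw : Integrable (fun z : ℝ => ((1 + ‖z‖) ^ 2)⁻¹) (volume.restrict s) :=
    (integrable_inv_one_add_norm_pow volume (by simp)).restrict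
  exact _root_.integrable_coneKernel μ σ _ (by fun_prop) (by fun_prop) (hw.const_mul A)
    ((integrable_inv_one_add_norm_pow μ (Nat.lt_succ_self _)).const_mul B) hw
    (fun p => by simpa using hA p.1 p.2) (fun p => hB p.1 p.2)

theorem coneTS_eq_coneTransform (n : ℕ) (F : Euc n × ℝ → ℝ) (u : Euc n) (s : ℝ) :
    coneTS n F u s = coneTransform ((volume : Measure (Euc n)).toSphere.map (↑))
      (volume.restrict (Ioi 0)) (fun p => F p * p.2 ^ (n - 2)) u s := by
  rw [coneTransform, (MeasurableEmbedding.subtype_coe isClosed_sphere.measurableSet).integral_map]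
  rfl

/-- **The cone transform `𝒞` is self-adjoint** with respect to the weight `s^{n-2}`. -/
theorem coneTS_self_adjoint (n : ℕ) (hn : 3 ≤ n) (f g : Euc n × Euc n → ℝ)
    (hf : IsSr n f) (hg : IsSr n g)
    (F G : Euc n × ℝ → ℝ)
    (hF : ∀ (x y : Euc n), f (x, y) = F (x, ‖y‖))
    (hG : ∀ (x y : Euc n), g (x, y) = G (x, ‖y‖)) :
    ∫ u : Euc n, ∫ s in Set.Ioi (0 : ℝ), coneTS n F u s * G (u, s) * s ^ (n - 2) =
    ∫ x : Euc n, ∫ z in Set.Ioi (0 : ℝ), F (x, z) * coneTS n G x z * z ^ (n - 2) := by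
  obtain ⟨⟨φ, rfl⟩, -⟩ := hf
  obtain ⟨⟨ψ, rfl⟩, -⟩ := hg
  have : Nontrivial (Euc n) :=
    Module.nontrivial_of_finrank_pos (by rw [finrank_euclideanSpace_fin]; omega)
  obtain ⟨e, he⟩ := exists_norm_eq (Euc n) zero_le_one
  set σ : Measure (Euc n) := (volume : Measure (Euc n)).toSphere.map (↑)
  set ρ := (volume : Measure ℝ).restrict (Ioi 0)
  have hprofile (H : Euc n × ℝ → ℝ) (h : Euc n × Euc n → ℝ) (hH : ∀ x y, h (x, y) = H (x, ‖y‖))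
      (x : Euc n) (z : ℝ) (hz : z > 0) : H (x, z) * z ^ (n - 2) = h (x, z • e) * z ^ (n - 2) := by
    rw [hH, norm_smul, he, mul_one, Real.norm_of_nonneg hz.le]
  have hK : Integrable (coneKernel (fun p => F p * p.2 ^ (n - 2)) (fun p => G p * p.2 ^ (n - 2)))
      (volume.prod (ρ.prod (σ.prod ρ))) :=
    (φ.integrable_coneKernel volume σ _ ψ he (n - 2)).congr
      (coneKernel_ae_eq volume σ ρ (ae_restrict_mem measurableSet_Ioi) (hprofile F _ hF)
        (hprofile G _ hG)).symm
  calc _ = ∫ u, ∫ s, coneTransform σ ρ (fun p => F p * p.2 ^ (n - 2)) u s *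
        (G (u, s) * s ^ (n - 2)) ∂ρ := by
        simp only [coneTS_eq_coneTransform, mul_assoc]
        rfl
    _ = _ := integral_coneTransform_mul volume σ ρ hK
    _ = _ := by
        simp only [coneTS_eq_coneTransform, mul_right_comm]
        rfl
end
end

section
/- Let n ≥ 2 be an integer. The cone transform C is injective on S_r(ℝ^{n-1} × ℝ^{n-1}): if f, g ∈ S_r(ℝ^{n-1} × ℝ^{n-1}) satisfy Cf(u, v) = Cg(u, v) for all (u, v) ∈ ℝ^{n-1} × ℝ^{n-1}, then f = g. -/
open MeasureTheory Complex
open scoped Real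

noncomputable section

namespace ConeAux

open scoped FourierTransform RealInnerProductSpace

variable {E F : Type*} [NormedAddCommGroup E] [NormedSpace ℝ E]
  [NormedAddCommGroup F] [NormedSpace ℝ F]

lemma schwartz_decay (f : SchwartzMap E ℝ) (k : ℕ) :
    ∃ C : ℝ, 0 ≤ C ∧ ∀ x, ‖f x‖ ≤ C * ((1 + ‖x‖)⁻¹) ^ k := by
  set C : ℝ := 2 ^ k * (Finset.Iic (k, 0)).sup (fun m => SchwartzMap.seminorm ℝ m.1 m.2) f with hC
  refine ⟨C, by positivity, fun x => ?_⟩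
  have h := SchwartzMap.one_add_le_sup_seminorm_apply (𝕜 := ℝ) (m := (k, 0))
    (le_refl k) (le_refl 0) f x
  rw [norm_iteratedFDeriv_zero] at h
  have hx : (0:ℝ) < (1 + ‖x‖) ^ k := by positivity
  have h2 : ‖f x‖ * (1 + ‖x‖) ^ k ≤ C := by rw [mul_comm]; exact h
  calc ‖f x‖ ≤ C / (1 + ‖x‖) ^ k := (le_div_iff₀ hx).2 h2
    _ = C * ((1 + ‖x‖)⁻¹) ^ k := by rw [div_eq_mul_inv, inv_pow]

lemma schwartz_decay_prod (f : SchwartzMap (E × F) ℝ) (k : ℕ) :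
    ∃ C : ℝ, 0 ≤ C ∧ ∀ u y, ‖f (u, y)‖ ≤ C * (((1 + ‖u‖)⁻¹) ^ k * ((1 + ‖y‖)⁻¹) ^ k) := by
  obtain ⟨C, hC0, hC⟩ := schwartz_decay f (k + k)
  refine ⟨C, hC0, fun u y => (hC (u, y)).trans ?_⟩
  have h1 : (1 + ‖u‖) ^ k * (1 + ‖y‖) ^ k ≤ (1 + ‖(u, y)‖) ^ (k + k) := by
    have hu : (1 + ‖u‖) ^ k ≤ (1 + ‖(u, y)‖) ^ k :=
      pow_le_pow_left₀ (by positivity) (by linarith [norm_fst_le (u, y)]) k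
    have hy : (1 + ‖y‖) ^ k ≤ (1 + ‖(u, y)‖) ^ k :=
      pow_le_pow_left₀ (by positivity) (by linarith [norm_snd_le (u, y)]) k
    rw [pow_add]
    exact mul_le_mul hu hy (by positivity) (by positivity)
  have h2 : ((1 + ‖(u, y)‖)⁻¹) ^ (k + k) ≤ ((1 + ‖u‖)⁻¹) ^ k * ((1 + ‖y‖)⁻¹) ^ k := by
    rw [inv_pow, inv_pow, inv_pow, ← mul_inv]
    exact inv_anti₀ (by positivity) h1
  calc C * ((1 + ‖(u, y)‖)⁻¹) ^ (k + k)
      ≤ C * (((1 + ‖u‖)⁻¹) ^ k * ((1 + ‖y‖)⁻¹) ^ k) := by gcongr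
    _ = _ := rfl

lemma zero_of_fourier {V : Type*} [NormedAddCommGroup V] [InnerProductSpace ℝ V]
    [MeasurableSpace V] [BorelSpace V] [FiniteDimensional ℝ V]
    {f : V → ℂ} (hi : Integrable f) (hc : Continuous f)
    (hz : ∀ ξ, 𝓕 f ξ = 0) (v : V) : f v = 0 := by
  have h0 : 𝓕 f = (fun _ => (0:ℂ)) := funext hz
  have h1 : Integrable (𝓕 f) := by rw [h0]; exact integrable_zero _ _ _
  have h2 := hi.fourierInv_fourier_eq h1 hc.continuousAt (v := v)
  rw [h0] at h2
  simpa [Real.fourierInv_eq] using h2.symm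

end ConeAux

open scoped FourierTransform RealInnerProductSpace

set_option maxHeartbeats 2000000 in
/-- **Injectivity of the cone transform on `S_r`.** -/
theorem coneT_injective (n : ℕ) (hn : 2 ≤ n) (f g : Euc n × Euc n → ℝ)
    (hf : IsSr n f) (hg : IsSr n g)
    (h : ∀ u v : Euc n, coneT n f (u, v) = coneT n g (u, v)) : f = g := by
  classical
  obtain ⟨F, hF⟩ := hf.1
  obtain ⟨G, hG⟩ := hg.1
  haveI : Nonempty (Fin (n - 1)) := ⟨⟨0, by omega⟩⟩
  haveI : Nontrivial (Euc n) := by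
    refine ⟨⟨EuclideanSpace.single (⟨0, by omega⟩ : Fin (n - 1)) (1:ℝ), 0, fun hcon => ?_⟩⟩
    have := congrArg norm hcon
    simp [EuclideanSpace.norm_single] at this
  set H : SchwartzMap (Euc n × Euc n) ℝ := F - G with hHdef
  have hHexp : ∀ p : Euc n × Euc n, H p = f p - g p := by
    intro p
    simp only [hHdef, SchwartzMap.sub_apply, hF, hG]
  have hHrad : ∀ (U : Euc n ≃ₗᵢ[ℝ] Euc n) (x y : Euc n), H (x, U y) = H (x, y) := by
    intro U x y
    rw [hHexp, hHexp, hf.2 U x y, hg.2 U x y]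
  -- decay and integrability setup
  obtain ⟨C, hC0, hCb⟩ := ConeAux.schwartz_decay_prod H n
  set J : Euc n → ℝ := fun y => ((1 + ‖y‖)⁻¹) ^ n with hJdef
  have hJnn : ∀ y, 0 ≤ J y := fun y => by positivity
  have hJ1 : ∀ y : Euc n, J y ≤ 1 := by
    intro y
    apply pow_le_one₀ (by positivity)
    rw [inv_le_one_iff₀]
    right; linarith [norm_nonneg y]
  have hJint : Integrable J := by
    have hd : (Module.finrank ℝ (Euc n) : ℝ) < n := by
      rw [finrank_euclideanSpace, Fintype.card_fin]
      exact_mod_cast Nat.sub_lt (by omega) one_pos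
    have heq : ∀ x : Euc n, ((1:ℝ) + ‖x‖) ^ (-(n:ℝ)) = J x := by
      intro x
      show _ = (1 + ‖x‖)⁻¹ ^ n
      rw [Real.rpow_neg (by positivity), Real.rpow_natCast, inv_pow]
    exact (integrable_one_add_norm hd).congr (ae_of_all _ heq)
  -- integrability of slices of Schwartz functions along y ↦ (u + t y, y)
  have hsliceS : ∀ (W : SchwartzMap (Euc n × Euc n) ℝ) (t : ℝ) (u : Euc n),
      Integrable (fun y : Euc n => W (u + t • y, y)) := by
    intro W t u
    obtain ⟨D, hD0, hDb⟩ := ConeAux.schwartz_decay_prod W n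
    refine Integrable.mono' (hJint.const_mul D)
      ((W.continuous.comp (by fun_prop)).aestronglyMeasurable)
      (ae_of_all _ fun y => ?_)
    calc ‖W (u + t • y, y)‖ ≤ D * (((1 + ‖u + t • y‖)⁻¹) ^ n * ((1 + ‖y‖)⁻¹) ^ n) := hDb _ _
      _ ≤ D * (1 * J y) := by
          gcongr
          apply pow_le_one₀ (by positivity)
          rw [inv_le_one_iff₀]
          right; linarith [norm_nonneg (u + t • y)]
      _ = D * J y := by rw [one_mul]
  -- the cone condition for H
  have hH0 : ∀ t : ℝ, 0 ≤ t → ∀ u : Euc n, (∫ y : Euc n, H (u + t • y, y)) = 0 := by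
    intro t ht u
    obtain ⟨v, hv⟩ : ∃ v : Euc n, ‖v‖ = t :=
      ⟨t • EuclideanSpace.single (⟨0, by omega⟩ : Fin (n - 1)) (1:ℝ), by
        simp [norm_smul, EuclideanSpace.norm_single, _root_.abs_of_nonneg ht]⟩
    have hfg := h u v
    simp only [coneT, hv] at hfg
    have hsplit : (∫ y : Euc n, H (u + t • y, y))
        = (∫ y : Euc n, F (u + t • y, y)) - ∫ y : Euc n, G (u + t • y, y) := by
      rw [← integral_sub (hsliceS F t u) (hsliceS G t u)]
      congr 1
    rw [hsplit, sub_eq_zero]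
    calc (∫ y : Euc n, F (u + t • y, y)) = ∫ y : Euc n, f (u + t • y, y) := by rw [hF]
      _ = ∫ y : Euc n, g (u + t • y, y) := hfg
      _ = ∫ y : Euc n, G (u + t • y, y) := by rw [hG]
  -- complexification and partial Fourier transform
  set Hc : Euc n × Euc n → ℂ := fun p => ((H p : ℝ) : ℂ) with hHcdef
  have hHccont : Continuous Hc := Complex.continuous_ofReal.comp H.continuous
  have hIntUr : ∀ y : Euc n, Integrable (fun u => H (u, y)) := by
    intro y
    refine Integrable.mono' (hJint.const_mul C)
      ((H.continuous.comp (by fun_prop)).aestronglyMeasurable)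
      (ae_of_all _ fun u => ?_)
    calc ‖H (u, y)‖ ≤ C * (J u * J y) := hCb u y
      _ ≤ C * (J u * 1) := by gcongr; exact hJ1 y
      _ = C * J u := by rw [mul_one]
  have hIntU : ∀ y : Euc n, Integrable (fun u => Hc (u, y)) := fun y => (hIntUr y).ofReal
  set φ : Euc n → Euc n → ℂ := fun ξ y => 𝓕 (fun u => Hc (u, y)) ξ with hφdef
  have hφeq : ∀ ξ y, φ ξ y = ∫ u : Euc n, 𝐞 (-⟪u, ξ⟫) • Hc (u, y) := by
    intro ξ y
    rw [hφdef]
    exact Real.fourier_eq _ _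
  have hφcont : ∀ ξ, Continuous (φ ξ) := by
    intro ξ
    have : Continuous fun y : Euc n => ∫ u : Euc n, 𝐞 (-⟪u, ξ⟫) • Hc (u, y) := by
      apply continuous_of_dominated (bound := fun u => C * J u)
      · intro y
        exact ((Real.continuous_fourierChar.comp
            ((continuous_id.inner continuous_const).neg)).smul
            (hHccont.comp (by fun_prop))).aestronglyMeasurable
      · intro y
        refine ae_of_all _ fun u => ?_
        rw [Circle.norm_smul]
        calc ‖Hc (u, y)‖ = ‖H (u, y)‖ := by rw [hHcdef]; exact Complex.norm_real _
          _ ≤ C * (J u * J y) := hCb u y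
          _ ≤ C * (J u * 1) := by gcongr; exact hJ1 y
          _ = C * J u := by rw [mul_one]
      · exact hJint.const_mul C
      · refine ae_of_all _ fun u => ?_
        exact continuous_const.smul (hHccont.comp (by fun_prop))
    have e : φ ξ = fun y => ∫ u : Euc n, 𝐞 (-⟪u, ξ⟫) • Hc (u, y) := funext (hφeq ξ)
    rw [e]; exact this
  have hφint : ∀ ξ, Integrable (φ ξ) := by
    intro ξ
    set A : ℝ := ∫ u : Euc n, J u with hA
    have hA0 : 0 ≤ A := integral_nonneg hJnn
    refine Integrable.mono' (hJint.const_mul (C * A)) (hφcont ξ).aestronglyMeasurable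
      (ae_of_all _ fun y => ?_)
    rw [hφeq]
    calc ‖∫ u : Euc n, 𝐞 (-⟪u, ξ⟫) • Hc (u, y)‖
        ≤ ∫ u : Euc n, ‖𝐞 (-⟪u, ξ⟫) • Hc (u, y)‖ := norm_integral_le_integral_norm _
      _ = ∫ u : Euc n, ‖H (u, y)‖ := by
          congr 1; funext u
          rw [Circle.norm_smul, hHcdef, Complex.norm_real]
      _ ≤ ∫ u : Euc n, (C * J y) * J u := by
          apply integral_mono (hIntUr y).norm ((hJint.const_mul (C * J y)))
          intro u
          calc ‖H (u, y)‖ ≤ C * (J u * J y) := hCb u y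
            _ = (C * J y) * J u := by ring
      _ = (C * J y) * A := by rw [integral_const_mul]
      _ = C * A * J y := by ring
  have hφrad : ∀ (ξ : Euc n) (U : Euc n ≃ₗᵢ[ℝ] Euc n) (y : Euc n), φ ξ (U y) = φ ξ y := by
    intro ξ U y
    rw [hφeq, hφeq]
    congr 1; funext u
    rw [hHcdef]
    simp only [hHrad]
  -- key vanishing of the Fourier transform of φ ξ on the ray -t ξ
  have hkey : ∀ (ξ : Euc n) (t : ℝ), 0 ≤ t → 𝓕 (φ ξ) (-(t • ξ)) = 0 := by
    intro ξ t ht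
    have hvol : (volume : Measure (Euc n × Euc n))
        = (volume : Measure (Euc n)).prod (volume : Measure (Euc n)) :=
      Measure.volume_eq_prod _ _
    have hS : MeasurePreserving (fun p : Euc n × Euc n => (p.1, p.2 + t • p.1))
        ((volume : Measure (Euc n)).prod volume) ((volume : Measure (Euc n)).prod volume) :=
      (MeasurePreserving.id volume).skew_product (g := fun a c => c + t • a)
        (by fun_prop)
        (ae_of_all _ fun a => map_add_right_eq_self volume (t • a))
    have hT : MeasurePreserving (fun p : Euc n × Euc n => (p.2 + t • p.1, p.1))
        ((volume : Measure (Euc n)).prod volume) ((volume : Measure (Euc n)).prod volume) :=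
      (Measure.measurePreserving_swap).comp hS
    have hT' : MeasurePreserving (fun p : Euc n × Euc n => (p.2 + t • p.1, p.1))
        (volume : Measure (Euc n × Euc n)) (volume : Measure (Euc n × Euc n)) := by
      rw [hvol]; exact hT
    haveI hhaar : (volume : Measure (Euc n × Euc n)).IsAddHaarMeasure := by
      have h2 : ((volume : Measure (Euc n)).prod (volume : Measure (Euc n))).IsAddHaarMeasure :=
        Measure.prod.instIsAddHaarMeasure _ _
      rwa [← Measure.volume_eq_prod (Euc n) (Euc n)] at h2
    have hHcInt : Integrable Hc := (SchwartzMap.integrable H).ofReal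
    have hInt2 : Integrable (fun p : Euc n × Euc n => Hc (p.2 + t • p.1, p.1)) := by
      exact (hT'.integrable_comp hHcInt.aestronglyMeasurable).2 hHcInt
    have hInt3 : Integrable
        (fun p : Euc n × Euc n => ((𝐞 (-⟪p.2, ξ⟫) : Circle) : ℂ) * Hc (p.2 + t • p.1, p.1)) := by
      have hchar : Continuous fun p : Euc n × Euc n => ((𝐞 (-⟪p.2, ξ⟫) : Circle) : ℂ) :=
        continuous_subtype_val.comp
          (Real.continuous_fourierChar.comp ((continuous_snd.inner continuous_const).neg))
      refine Integrable.mono' hInt2.norm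
        ((hchar.mul (hHccont.comp (by fun_prop))).aestronglyMeasurable)
        (ae_of_all _ fun p => ?_)
      simp [norm_mul, Circle.norm_coe]
    -- pointwise character identity
    have hpoint : ∀ (y w : Euc n) (z : ℂ),
        ((𝐞 (-⟪y, -(t • ξ)⟫) : Circle) : ℂ) * (((𝐞 (-⟪w + t • y, ξ⟫) : Circle) : ℂ) * z)
          = ((𝐞 (-⟪w, ξ⟫) : Circle) : ℂ) * z := by
      intro y w z
      rw [← mul_assoc, ← Circle.coe_mul, ← AddChar.map_add_eq_mul]
      congr 3
      simp only [inner_neg_right, real_inner_smul_right, inner_add_left, real_inner_smul_left]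
      ring
    have step1 : 𝓕 (φ ξ) (-(t • ξ))
        = ∫ y : Euc n, ∫ w : Euc n, ((𝐞 (-⟪w, ξ⟫) : Circle) : ℂ) * Hc (w + t • y, y) := by
      rw [Real.fourier_eq]
      simp only [Circle.smul_def, smul_eq_mul]
      congr 1; funext y
      have htrans := integral_add_right_eq_self (μ := (volume : Measure (Euc n)))
        (fun u : Euc n => ((𝐞 (-⟪y, -(t • ξ)⟫) : Circle) : ℂ)
          * (((𝐞 (-⟪u, ξ⟫) : Circle) : ℂ) * Hc (u, y))) (t • y)
      rw [hφeq]
      simp only [Circle.smul_def, smul_eq_mul]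
      rw [← integral_const_mul, ← htrans]
      exact integral_congr_ae (ae_of_all _ fun w => hpoint y w _)
    have step2 : (∫ y : Euc n, ∫ w : Euc n, ((𝐞 (-⟪w, ξ⟫) : Circle) : ℂ) * Hc (w + t • y, y))
        = ∫ w : Euc n, ∫ y : Euc n, ((𝐞 (-⟪w, ξ⟫) : Circle) : ℂ) * Hc (w + t • y, y) := by
      apply integral_integral_swap
      rw [← hvol]
      exact hInt3
    have step3 : ∀ w : Euc n,
        (∫ y : Euc n, ((𝐞 (-⟪w, ξ⟫) : Circle) : ℂ) * Hc (w + t • y, y)) = 0 := by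
      intro w
      rw [integral_const_mul]
      have hofReal : (∫ y : Euc n, Hc (w + t • y, y))
          = ((∫ y : Euc n, H (w + t • y, y) : ℝ) : ℂ) := integral_ofReal
      rw [hofReal, hH0 t ht w, Complex.ofReal_zero, mul_zero]
    rw [step1, step2]
    simp only [step3, integral_zero]
  -- the Fourier transform of φ ξ vanishes everywhere, for ξ ≠ 0
  have h𝓕φ : ∀ ξ : Euc n, ξ ≠ 0 → ∀ η : Euc n, 𝓕 (φ ξ) η = 0 := by
    intro ξ hξ η
    set t : ℝ := ‖η‖ / ‖ξ‖ with htdef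
    have ht : 0 ≤ t := div_nonneg (norm_nonneg _) (norm_nonneg _)
    have hnorm : ‖(-(t • ξ))‖ = ‖η‖ := by
      rw [norm_neg, norm_smul, Real.norm_eq_abs, _root_.abs_of_nonneg ht, htdef,
        div_mul_cancel₀ _ (norm_ne_zero_iff.2 hξ)]
    set U : Euc n ≃ₗᵢ[ℝ] Euc n := Submodule.reflection (ℝ ∙ ((-(t • ξ)) - η))ᗮ with hUdef
    have hU : U (-(t • ξ)) = η := Submodule.reflection_sub hnorm
    have hradF : 𝓕 (φ ξ) (U (-(t • ξ))) = 𝓕 (φ ξ) (-(t • ξ)) := by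
      have hcomp : φ ξ ∘ U = φ ξ := funext fun y => hφrad ξ U y
      rw [← Real.fourier_comp_linearIsometry U (φ ξ), hcomp]
    rw [← hU, hradF]
    exact hkey ξ t ht
  -- hence φ ξ = 0 for ξ ≠ 0
  have hφ0 : ∀ ξ : Euc n, ξ ≠ 0 → ∀ y, φ ξ y = 0 := fun ξ hξ y =>
    ConeAux.zero_of_fourier (hφint ξ) (hφcont ξ) (h𝓕φ ξ hξ) y
  -- for each fixed y, ξ ↦ φ ξ y is continuous and vanishes on a dense set
  have hφ0' : ∀ (y : Euc n) (ξ : Euc n), φ ξ y = 0 := by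
    intro y
    have hcont2 : Continuous fun ξ : Euc n => φ ξ y := by
      simp only [hφdef]
      exact VectorFourier.fourierIntegral_continuous Real.continuous_fourierChar
        (by exact continuous_inner) (hIntU y)
    have hdense : Dense ({(0:Euc n)}ᶜ : Set (Euc n)) := dense_compl_singleton 0
    have heq : (fun ξ : Euc n => φ ξ y) = fun _ => (0:ℂ) :=
      Continuous.ext_on hdense hcont2 continuous_const
        (fun ξ hξ => hφ0 ξ hξ y)
    intro ξ
    exact congrFun heq ξ
  -- conclude H = 0 by Fourier inversion in the first variable
  have hHzero : ∀ p : Euc n × Euc n, H p = 0 := by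
    rintro ⟨u, y⟩
    have h1 : (fun u : Euc n => Hc (u, y)) u = 0 := by
      refine ConeAux.zero_of_fourier (hIntU y) (hHccont.comp (by fun_prop)) ?_ u
      intro ξ
      have := hφ0' y ξ
      rw [hφeq] at this
      rw [Real.fourier_eq]
      exact this
    have : ((H (u, y) : ℝ) : ℂ) = 0 := h1
    exact_mod_cast this
  funext p
  have := hHzero p
  rw [hHexp] at this
  linarith [this]
end
end
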